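/- In the hit-and-run BLAF with constraint P(T3) ≥ 0.7, the bound P(T1) ≤ 1/3 is tight: there is a satisfying assignment with P(T1) = 1/3, and the maximum of P(T1) over all satisfying assignments equals 1/3. -/

import Mathlib

/-! Everything is linear. The chain `P(T3) ≤ P(T2) ≤ P(E_ex) ≤ P(Innocence) ≤ 1 - P(E_inc)` together
with `0.7 ≤ P(T3)` forces `P(E_inc) ≤ 0.3`, hence `P(T1) ≤ P(E_inc) / 0.9 ≤ 1/3`; the bound is
attained by saturating every link of the chain at `0.7`. -/

theorem stmt_13
    (S : Set (ℝ × ℝ × ℝ × ℝ × ℝ × ℝ × ℝ))  -- (PInn, PEinc, PEex, PT1, PT2, PT3, PE1)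
    (hS : S = {p : ℝ × ℝ × ℝ × ℝ × ℝ × ℝ × ℝ |
      (0 ≤ p.1 ∧ p.1 ≤ 1) ∧ (0 ≤ p.2.1 ∧ p.2.1 ≤ 1) ∧
      (0 ≤ p.2.2.1 ∧ p.2.2.1 ≤ 1) ∧ (0 ≤ p.2.2.2.1 ∧ p.2.2.2.1 ≤ 1) ∧
      (0 ≤ p.2.2.2.2.1 ∧ p.2.2.2.2.1 ≤ 1) ∧ (0 ≤ p.2.2.2.2.2.1 ∧ p.2.2.2.2.2.1 ≤ 1) ∧
      (0 ≤ p.2.2.2.2.2.2 ∧ p.2.2.2.2.2.2 ≤ 1) ∧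
      p.1 ≤ 1 - p.2.1 ∧ p.2.2.1 ≤ p.1 ∧
      0.9 * p.2.2.2.1 ≤ p.2.1 ∧ p.2.2.2.2.2.2 ≤ p.2.1 ∧
      p.2.2.2.2.1 ≤ p.2.2.1 ∧ p.2.2.2.2.2.1 ≤ p.2.2.2.2.1 ∧
      0.7 ≤ p.2.2.2.2.2.1}) :
    (∃ p ∈ S, p.2.2.2.1 = 1 / 3) ∧
    IsGreatest ((fun p : ℝ × ℝ × ℝ × ℝ × ℝ × ℝ × ℝ => p.2.2.2.1) '' S) (1 / 3) := by
  have hwitness : ((0.7 : ℝ), 0.3, 0.7, 1 / 3, 0.7, 0.7, 0.3) ∈ S := by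
    rw [hS]
    norm_num
  refine ⟨⟨_, hwitness, rfl⟩, ⟨_, hwitness, rfl⟩, ?_⟩
  rintro _ ⟨⟨inn, eInc, eEx, t1, t2, t3, e1⟩, hp, rfl⟩
  rw [hS] at hp
  obtain ⟨-, -, -, -, -, -, -, hInn, hEx, hT1, -, hT2, hT3, h07⟩ := hp
  have hEInc : eInc ≤ 1 - 0.7 := by linarith
  calc t1 ≤ eInc / 0.9 := by rw [le_div_iff₀ (by norm_num)]; linarith
    _ ≤ (1 - 0.7) / 0.9 := by gcongr
    _ = 1 / 3 := by norm_num
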